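/- arXiv:1212.5522 — 3 statements merged into one kernel-verified Lean document; each statement's English description precedes it below -/
import Mathlib

section
/- Let B be a finite additive commutative group, n ≥ 1, and q_1,…,q_n ≥ 1 with q_n coprime to the cardinality |B|. Let f : ℤ^n → B be a polyfractal function that is q_j-periodic in the j-th variable for each j. Then f does not depend on its last variable: f(x) = f(y) for all x, y ∈ ℤ^n with x_j = y_j for all j ≠ n. -/
noncomputable def ibinom (x : ℤ) (δ : ℕ) : ℤ := Ring.choose x δ

lemma ibinom_zero (x : ℤ) : ibinom x 0 = 1 := Ring.choose_zero_right x
lemma ibinom_one (x : ℤ) : ibinom x 1 = x := Ring.choose_one_right x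
lemma ibinom_pascal (x : ℤ) (k : ℕ) :
    ibinom (x + 1) (k + 1) = ibinom x k + ibinom x (k + 1) :=
  Ring.choose_succ_succ x k

section OneVar

variable {B : Type*} [AddCommGroup B]

/-- forward difference operator -/
def ddiff (g : ℤ → B) : ℤ → B := fun t => g (t + 1) - g t

lemma ddiff_sum (b : ℕ → B) (k : ℕ) :
    ddiff (fun t => ∑ m ∈ Finset.range (k + 1), ibinom t m • b m)
      = fun t => ∑ m ∈ Finset.range k, ibinom t m • b (m + 1) := by
  funext t
  simp only [ddiff]
  rw [Finset.sum_range_succ' (fun m => ibinom (t + 1) m • b m),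
    Finset.sum_range_succ' (fun m => ibinom t m • b m)]
  simp only [ibinom_zero, one_smul, ibinom_pascal, add_smul]
  rw [Finset.sum_add_distrib]
  abel

lemma ddiff_iter (k : ℕ) (b : ℕ → B) :
    ddiff^[k] (fun t => ∑ m ∈ Finset.range (k + 2), ibinom t m • b m)
      = fun t => b k + t • b (k + 1) := by
  induction k generalizing b with
  | zero =>
    funext t
    simp [Finset.sum_range_succ, ibinom_zero, ibinom_one]
  | succ k ih =>
    rw [Function.iterate_succ_apply]
    have h1 : ddiff (fun t => ∑ m ∈ Finset.range (k + 3), ibinom t m • b m)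
        = fun t => ∑ m ∈ Finset.range (k + 2), ibinom t m • b (m + 1) :=
      ddiff_sum b (k + 2)
    rw [show k + 1 + 2 = k + 3 from rfl, h1, ih (fun m => b (m + 1))]

lemma ddiff_iter_periodic {g : ℤ → B} {Q : ℤ} (hg : ∀ t, g (t + Q) = g t) (k : ℕ) :
    ∀ t, (ddiff^[k] g) (t + Q) = (ddiff^[k] g) t := by
  induction k generalizing g with
  | zero => simpa using hg
  | succ k ih =>
    rw [Function.iterate_succ_apply]
    refine ih ?_
    intro t
    simp only [ddiff]
    rw [show t + Q + 1 = (t + 1) + Q by ring, hg, hg]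

lemma coprime_smul_zero {N Q : ℕ} (hco : Nat.Coprime Q N) (x : B)
    (hN : N • x = 0) (hQ : Q • x = 0) : x = 0 := by
  have hb : (Nat.gcd Q N : ℤ) = Q * Nat.gcdA Q N + N * Nat.gcdB Q N := Nat.gcd_eq_gcd_ab Q N
  rw [hco] at hb
  calc x = (1 : ℤ) • x := (one_smul ℤ x).symm
    _ = ((Q : ℤ) * Nat.gcdA Q N + (N : ℤ) * Nat.gcdB Q N) • x := by rw [← hb]; norm_num
    _ = 0 := by
        rw [add_smul, mul_comm (Q : ℤ), mul_comm (N : ℤ), mul_smul, mul_smul,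
          natCast_zsmul, natCast_zsmul, hQ, hN, smul_zero, smul_zero, add_zero]

lemma onevar (N Q : ℕ) (hco : Nat.Coprime Q N) (hN : ∀ x : B, N • x = 0) :
    ∀ (D : ℕ) (b : ℕ → B), (∀ m, D < m → b m = 0) →
      (∀ t : ℤ, (∑ m ∈ Finset.range (D + 1), ibinom (t + Q) m • b m)
        = ∑ m ∈ Finset.range (D + 1), ibinom t m • b m) →
      ∀ m, 1 ≤ m → b m = 0 := by
  intro D
  induction D with
  | zero => intro b hb _ m hm; exact hb m hm
  | succ D ih =>
    intro b hb hper
    have hgper : ∀ t : ℤ, (fun t => ∑ m ∈ Finset.range (D + 2), ibinom t m • b m)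
        (t + (Q : ℤ)) = (fun t => ∑ m ∈ Finset.range (D + 2), ibinom t m • b m) t := hper
    have hp := ddiff_iter_periodic
      (g := fun t => ∑ m ∈ Finset.range (D + 2), ibinom t m • b m)
      (Q := (Q : ℤ)) hgper D 0
    rw [ddiff_iter D b] at hp
    simp only [zero_add, zero_smul, add_zero] at hp
    have hq : Q • b (D + 1) = 0 := by
      have h0 : (Q : ℤ) • b (D + 1) = 0 := by
        have h := congrArg (fun z => z - b D) hp
        simpa using h
      rwa [natCast_zsmul] at h0
    have hD1 : b (D + 1) = 0 := coprime_smul_zero hco _ (hN _) hq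
    refine ih b (fun m hm => ?_) (fun t => ?_)
    · rcases Nat.lt_or_ge m (D + 2) with h | h
      · have : m = D + 1 := by omega
        rw [this]; exact hD1
      · exact hb m (by omega)
    · have h2 : ∀ s : ℤ, ∑ m ∈ Finset.range (D + 2), ibinom s m • b m
          = ∑ m ∈ Finset.range (D + 1), ibinom s m • b m := by
        intro s
        rw [Finset.sum_range_succ, hD1, smul_zero, add_zero]
      have := hper t
      rwa [h2, h2] at this

end OneVar

/-- If `f : ℤ^{n+1} → B` (so `n+1 ≥ 1` variables) is polyfractal and `q_j`-periodic in the
`j`-th variable, and the period `q` of the last variable is coprime to `|B|`, then `f`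
does not depend on its last variable. -/
theorem stmt_16 (B : Type*) [AddCommGroup B] [Finite B] (n : ℕ)
    (q : Fin (n + 1) → ℕ) (hq : ∀ j, 1 ≤ q j)
    (hco : Nat.Coprime (q (Fin.last n)) (Nat.card B))
    (f : (Fin (n + 1) → ℤ) → B)
    (hpoly : ∃ c : (Fin (n + 1) → ℕ) →₀ B,
      ∀ x : Fin (n + 1) → ℤ, f x = c.sum fun δ b => (∏ j, ibinom (x j) (δ j)) • b)
    (hper : ∀ (x : Fin (n + 1) → ℤ) (j : Fin (n + 1)),
      f (Function.update x j (x j + q j)) = f x) :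
    ∀ x y : Fin (n + 1) → ℤ, (∀ j, j ≠ Fin.last n → x j = y j) → f x = f y := by
  obtain ⟨c, hc⟩ := hpoly
  intro x y hxy
  set L := Fin.last n with hL
  set Q := q L with hQ
  set g : ℤ → B := fun t => f (Function.update x L t) with hg
  -- f x and f y via g
  have hfx : f x = g (x L) := by rw [hg]; simp [Function.update_eq_self]
  have hxyL : Function.update x L (y L) = y := by
    funext j
    rcases eq_or_ne j L with h | h
    · subst h; simp
    · rw [Function.update_of_ne h, hxy j h]
  have hfy : f y = g (y L) := by rw [hg]; simp [hxyL]
  -- periodicity of g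
  have hgper : ∀ t : ℤ, g (t + (Q : ℤ)) = g t := by
    intro t
    have := hper (Function.update x L t) L
    rwa [Function.update_self, Function.update_idem] at this
  -- one-variable polyfractal form of g
  set D := c.support.sup (fun δ => δ L) with hD
  set P : (Fin (n + 1) → ℕ) → ℤ :=
    fun δ => ∏ j : Fin n, ibinom (x j.castSucc) (δ j.castSucc) with hP
  set b : ℕ → B := fun m =>
    ∑ δ ∈ c.support.filter (fun δ => δ L = m), P δ • c δ with hb
  have hgb : ∀ t : ℤ, g t = ∑ m ∈ Finset.range (D + 1), ibinom t m • b m := by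
    intro t
    have h1 : g t = ∑ δ ∈ c.support,
        (P δ * ibinom t (δ L)) • c δ := by
      rw [show g t = f (Function.update x L t) from rfl, hc]
      refine Finset.sum_congr rfl (fun δ _ => ?_)
      show (∏ j : Fin (n + 1), ibinom (Function.update x L t j) (δ j)) • c δ
          = (P δ * ibinom t (δ L)) • c δ
      congr 1
      rw [Fin.prod_univ_castSucc]
      congr 1
      · refine Finset.prod_congr rfl (fun j _ => ?_)
        rw [Function.update_of_ne (Fin.castSucc_lt_last j).ne]
      · rw [Function.update_self]
    rw [h1]
    rw [← Finset.sum_fiberwise_of_maps_to (t := Finset.range (D + 1)) (g := fun δ => δ L)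
      (fun δ hδ => Finset.mem_range.mpr (Nat.lt_succ_of_le
        (Finset.le_sup (f := fun δ => δ L) hδ)))
      (fun δ => (P δ * ibinom t (δ L)) • c δ)]
    refine Finset.sum_congr rfl (fun m _ => ?_)
    rw [hb, Finset.smul_sum]
    refine Finset.sum_congr rfl (fun δ hδ => ?_)
    have hδL : δ L = m := (Finset.mem_filter.mp hδ).2
    rw [hδL, mul_comm, mul_smul]
  -- coefficients above D vanish
  have hbtop : ∀ m, D < m → b m = 0 := by
    intro m hm
    show (∑ δ ∈ Finset.filter (fun δ => δ L = m) c.support, P δ • c δ) = 0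
    have hempty : Finset.filter (fun δ => δ L = m) c.support = ∅ := by
      refine Finset.filter_false_of_mem (fun δ hδ => fun hδL => ?_)
      have h1 : δ L ≤ D := Finset.le_sup (f := fun δ => δ L) hδ
      exact absurd hm (Nat.not_lt.mpr (hδL ▸ h1))
    rw [hempty, Finset.sum_empty]
  -- apply the one-variable lemma
  have hb1 : ∀ m, 1 ≤ m → b m = 0 := by
    refine onevar (Nat.card B) Q hco (fun z => card_nsmul_eq_zero') D b hbtop (fun t => ?_)
    rw [← hgb, ← hgb, hgper]
  have hgconst : ∀ t : ℤ, g t = b 0 := by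
    intro t
    rw [hgb]
    rw [Finset.sum_eq_single_of_mem 0 (Finset.mem_range.mpr (Nat.succ_pos D))]
    · rw [ibinom_zero, one_smul]
    · intro m _ hm
      rw [hb1 m (Nat.one_le_iff_ne_zero.mpr hm), smul_zero]
  rw [hfx, hfy, hgconst, hgconst]
end

section
/- Let B_1 and B_2 be finite additive commutative groups, n ≥ 1, 0 ≤ s ≤ n, and q_1,…,q_n ≥ 2 such that q_1·q_2⋯q_s is coprime to |B_2| and q_{s+1}·q_{s+2}⋯q_n is coprime to |B_1|. Let f = (f_1, f_2) : ℤ^n → B_1 × B_2 be a polyfractal function that is q_j-periodic in the j-th variable for each j. Then the first component f_1 depends only on the variables x_1,…,x_s and the second component f_2 depends only on the variables x_{s+1},…,x_n; that is, f_1(x) = f_1(y) whenever x_j = y_j for all j ≤ s, and f_2(x) = f_2(y) whenever x_j = y_j for all j > s. -/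
open Function Finset fwdDiff

lemma fwdDiff_iter_smul_const {M G R : Type*} [AddCommMonoid M] [AddCommGroup G] [Ring R]
    [Module R G] (h : M) (f : M → R) (g : G) (n : ℕ) :
    Δ_[h] ^[n] (fun y ↦ f y • g) = fun y ↦ Δ_[h] ^[n] f y • g := by
  induction n generalizing f with
  | zero => rfl
  | succ n ih => rw [iterate_succ_apply, iterate_succ_apply, fwdDiff_smul_const, ← ih]; rfl

lemma fwdDiff_ibinom_succ (k : ℕ) : Δ_[1] (fun x ↦ ibinom x (k + 1)) = fun x ↦ ibinom x k := by
  ext x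
  simp only [fwdDiff, ibinom, Ring.choose_succ_succ, add_sub_cancel_right]

lemma fwdDiff_iter_ibinom_of_lt {k m : ℕ} (hkm : k < m) :
    Δ_[1] ^[m] (fun x ↦ ibinom x k) = 0 := by
  obtain ⟨m, rfl⟩ := Nat.exists_eq_add_of_lt hkm
  induction k generalizing m with
  | zero =>
    rw [add_assoc, iterate_add_apply, iterate_succ_apply]
    simp only [ibinom, Ring.choose_zero_right, fwdDiff_const]
    exact iterate_fixed (fwdDiff_const 1 0) _
  | succ k ih =>
    rw [show k + 1 + m + 1 = (k + (m + 1) + 1) by omega, iterate_succ_apply, fwdDiff_ibinom_succ]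
    exact ih _ (by omega)

lemma periodic_one_of_coprime_of_fwdDiff_iter_eq_zero {B : Type*} [AddCommGroup B] {q : ℕ}
    (hq : (Nat.card B).Coprime q) {g : ℤ → B} (hg : Periodic g q) {D : ℕ}
    (hD : Δ_[1] ^[D] g = 0) : Periodic g 1 := by
  induction D generalizing g with
  | zero => simp only [iterate_zero, id_eq] at hD; simp [hD, Periodic]
  | succ D ih =>
    have hΔ : Periodic (Δ_[1] g) 1 :=
      ih (fun t ↦ by rw [fwdDiff, fwdDiff, add_right_comm, hg, hg]) hD
    have hconst : ∀ t, Δ_[1] g t = Δ_[1] g 0 := fun t ↦ by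
      simpa using hΔ.int_mul_eq t
    have hsum : q • Δ_[1] g 0 = 0 := calc
      q • Δ_[1] g 0 = ∑ i ∈ range q, Δ_[1] g i := by simp [hconst]
      _ = g q - g 0 := by simpa [fwdDiff] using sum_range_sub (fun i : ℕ ↦ g i) q
      _ = 0 := by simpa [sub_eq_zero] using hg 0
    have hzero : Δ_[1] g 0 = 0 := (Nat.Coprime.nsmul_right_bijective hq).injective
      (by simpa using hsum)
    intro t
    rw [← sub_eq_zero]
    exact (hconst t).trans hzero

section Polyfractal

variable {ι B C : Type*} [Fintype ι] [AddCommGroup B] [AddCommGroup C]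

def IsPolyfractal (f : (ι → ℤ) → B) : Prop :=
  ∃ c : (ι → ℕ) →₀ B, ∀ x, f x = c.sum fun δ b ↦ (∏ j, ibinom (x j) (δ j)) • b

lemma IsPolyfractal.map {f : (ι → ℤ) → C} (hf : IsPolyfractal f) (π : C →+ B) :
    IsPolyfractal (π ∘ f) := by
  obtain ⟨c, hc⟩ := hf
  refine ⟨c.mapRange π π.map_zero, fun x ↦ ?_⟩
  rw [comp_apply, hc, Finsupp.sum_mapRange_index (fun _ ↦ smul_zero _), map_finsuppSum]
  simp only [map_zsmul]

variable [DecidableEq ι]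

lemma IsPolyfractal.exists_fwdDiff_iter_update_eq_zero {f : (ι → ℤ) → B} (hf : IsPolyfractal f)
    (x : ι → ℤ) (j : ι) : ∃ D, Δ_[1] ^[D] (fun t ↦ f (update x j t)) = 0 := by
  obtain ⟨c, hc⟩ := hf
  set b : (ι → ℕ) → B := fun δ ↦ (∏ k ∈ univ.erase j, ibinom (x k) (δ k)) • c δ
  have hline : (fun t ↦ f (update x j t)) = ∑ δ ∈ c.support, fun t ↦ ibinom t (δ j) • b δ := by
    ext t
    rw [hc, Finsupp.sum, Finset.sum_apply]
    refine sum_congr rfl fun δ _ ↦ ?_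
    rw [← mul_prod_erase univ _ (mem_univ j), update_self, mul_smul]
    congr 2
    exact prod_congr rfl fun k hk ↦ by rw [update_of_ne (ne_of_mem_erase hk)]
  refine ⟨c.support.sup (· j) + 1, ?_⟩
  rw [hline, fwdDiff_iter_finsetSum]
  refine sum_eq_zero fun δ hδ ↦ ?_
  rw [fwdDiff_iter_smul_const, fwdDiff_iter_ibinom_of_lt (Nat.lt_succ_of_le (le_sup hδ))]
  ext t
  simp

lemma IsPolyfractal.update_eq_of_coprime {f : (ι → ℤ) → B} (hf : IsPolyfractal f) {j : ι} {q : ℕ}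
    (hq : q.Coprime (Nat.card B)) (hper : ∀ x, f (update x j (x j + q)) = f x)
    (x : ι → ℤ) (t : ℤ) : f (update x j t) = f x := by
  obtain ⟨D, hD⟩ := hf.exists_fwdDiff_iter_update_eq_zero x j
  have h1 := periodic_one_of_coprime_of_fwdDiff_iter_eq_zero hq.symm
    (fun u ↦ by simpa using hper (update x j u)) hD
  simpa using (h1.int_mul_eq t).trans (h1.int_mul_eq (x j)).symm

end Polyfractal

lemma eq_of_forall_update_eq {ι α β : Type*} [Fintype ι] [DecidableEq ι] {p : ι → Prop}
    {F : (ι → α) → β} (hF : ∀ x j t, p j → F (update x j t) = F x) {x y : ι → α}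
    (hxy : ∀ j, ¬ p j → x j = y j) : F x = F y := by
  classical
  suffices ∀ T : Finset ι, (∀ j ∈ T, p j) → ∀ x, (∀ j ∉ T, x j = y j) → F x = F y from
    this (univ.filter p) (by simp) x fun j hj ↦ hxy j (by simpa using hj)
  intro T
  induction T using Finset.induction_on with
  | empty => exact fun _ x hx ↦ congrArg F (funext fun j ↦ hx j (notMem_empty j))
  | insert j T _ ih =>
    intro hp x hx
    rw [← hF x j (y j) (hp j (mem_insert_self j T))]
    refine ih (fun k hk ↦ hp k (mem_insert_of_mem hk)) _ fun k hk ↦ ?_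
    rcases eq_or_ne k j with rfl | hkj
    · exact update_self ..
    · rw [update_of_ne hkj]
      exact hx k (by simp [hk, hkj])

theorem stmt_17_general (B₁ B₂ : Type*) [AddCommGroup B₁] [AddCommGroup B₂]
    (n : ℕ) (s : ℕ)
    (q : Fin n → ℕ)
    (hco₁ : Nat.Coprime (∏ j ∈ Finset.univ.filter (fun j : Fin n => (j : ℕ) < s), q j)
      (Nat.card B₂))
    (hco₂ : Nat.Coprime (∏ j ∈ Finset.univ.filter (fun j : Fin n => s ≤ (j : ℕ)), q j)
      (Nat.card B₁))
    (f : (Fin n → ℤ) → B₁ × B₂)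
    (hpoly : ∃ c : (Fin n → ℕ) →₀ B₁ × B₂,
      ∀ x : Fin n → ℤ, f x = c.sum fun δ b => (∏ j, ibinom (x j) (δ j)) • b)
    (hper : ∀ (x : Fin n → ℤ) (j : Fin n),
      f (Function.update x j (x j + q j)) = f x) :
    (∀ x y : Fin n → ℤ, (∀ j : Fin n, (j : ℕ) < s → x j = y j) → (f x).1 = (f y).1) ∧
      (∀ x y : Fin n → ℤ, (∀ j : Fin n, s ≤ (j : ℕ) → x j = y j) → (f x).2 = (f y).2) := by
  have hf : IsPolyfractal f := hpoly
  refine ⟨fun x y hxy ↦ ?_, fun x y hxy ↦ ?_⟩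
  · exact eq_of_forall_update_eq (F := Prod.fst ∘ f) (p := fun j : Fin n ↦ s ≤ (j : ℕ))
      (fun x j t hj ↦ (hf.map (AddMonoidHom.fst B₁ B₂)).update_eq_of_coprime
        (hco₂.coprime_dvd_left (dvd_prod_of_mem q (by simpa using hj)))
        (fun x ↦ congrArg Prod.fst (hper x j)) x t) fun j hj ↦ hxy j (by omega)
  · exact eq_of_forall_update_eq (F := Prod.snd ∘ f) (p := fun j : Fin n ↦ (j : ℕ) < s)
      (fun x j t hj ↦ (hf.map (AddMonoidHom.snd B₁ B₂)).update_eq_of_coprime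
        (hco₁.coprime_dvd_left (dvd_prod_of_mem q (by simpa using hj)))
        (fun x ↦ congrArg Prod.snd (hper x j)) x t) fun j hj ↦ hxy j (by omega)

/-- Decomposition theorem: if `f = (f₁,f₂) : ℤ^n → B₁ × B₂` is polyfractal and
`q_j`-periodic in the `j`-th variable, where `q_1⋯q_s` is coprime to `|B₂|` and
`q_{s+1}⋯q_n` is coprime to `|B₁|`, then `f₁` depends only on `x_1,…,x_s` and `f₂`
depends only on `x_{s+1},…,x_n`. -/
theorem stmt_17 (B₁ B₂ : Type*) [AddCommGroup B₁] [Finite B₁] [AddCommGroup B₂] [Finite B₂]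
    (n : ℕ) (hn : 1 ≤ n) (s : ℕ) (hs : s ≤ n)
    (q : Fin n → ℕ) (hq : ∀ j, 2 ≤ q j)
    (hco₁ : Nat.Coprime (∏ j ∈ Finset.univ.filter (fun j : Fin n => (j : ℕ) < s), q j)
      (Nat.card B₂))
    (hco₂ : Nat.Coprime (∏ j ∈ Finset.univ.filter (fun j : Fin n => s ≤ (j : ℕ)), q j)
      (Nat.card B₁))
    (f : (Fin n → ℤ) → B₁ × B₂)
    (hpoly : ∃ c : (Fin n → ℕ) →₀ B₁ × B₂,
      ∀ x : Fin n → ℤ, f x = c.sum fun δ b => (∏ j, ibinom (x j) (δ j)) • b)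
    (hper : ∀ (x : Fin n → ℤ) (j : Fin n),
      f (Function.update x j (x j + q j)) = f x) :
    (∀ x y : Fin n → ℤ, (∀ j : Fin n, (j : ℕ) < s → x j = y j) → (f x).1 = (f y).1) ∧
      (∀ x y : Fin n → ℤ, (∀ j : Fin n, s ≤ (j : ℕ) → x j = y j) → (f x).2 = (f y).2) :=
  stmt_17_general B₁ B₂ n s q hco₁ hco₂ f hpoly hper
end

section
/- Let r ≥ 2, q ≥ 1, and let f : ℤ → ZMod r be a q-periodic function. Then f is polyfractal if and only if for every prime p dividing r, the composition of f with the natural reduction map ZMod r → ZMod(p^{v_p(r)}) is p^{v_p(q)}-periodic, where v_p denotes the p-adic valuation. (This is the classification of polyfractal maps between finite cyclic groups: the polyfractal maps ℤ_q → ℤ_r are exactly the maps whose p-primary components depend only on the corresponding p-primary component of the argument.) -/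
open Finset Function fwdDiff

section fwdDiff

variable {M G : Type*} [AddCommMonoid M] [AddCommGroup G] (h : M)

lemma fwdDiff_iter_zero (n : ℕ) : Δ_[h] ^[n] (0 : M → G) = 0 :=
  iterate_fixed (fwdDiff_const h 0) n

lemma fwdDiff_iter_eq_zero_of_le {f : M → G} {m n : ℕ} (hf : Δ_[h] ^[m] f = 0) (hmn : m ≤ n) :
    Δ_[h] ^[n] f = 0 := by
  rw [← Nat.sub_add_cancel hmn, iterate_add_apply, hf, fwdDiff_iter_zero]

lemma fwdDiff_iter_comp_addMonoidHom {H : Type*} [AddCommGroup H] (φ : G →+ H) (f : M → G)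
    (n : ℕ) : Δ_[h] ^[n] (φ ∘ f) = φ ∘ Δ_[h] ^[n] f := by
  ext y
  simp [fwdDiff_iter_eq_sum_shift, map_sum, map_zsmul]

end fwdDiff

lemma eq_of_fwdDiff_eq_zero {G : Type*} [AddCommGroup G] {u : ℤ → G} (hu : Δ_[1] u = 0) (x : ℤ) :
    u x = u 0 := by
  have hper : Periodic u 1 := fun y => sub_eq_zero.1 (congrFun hu y)
  simpa using hper.int_mul_eq x

noncomputable section Polyfractal

variable (R : Type*) [CommRing R]

def binomialFun (δ : ℕ) : ℤ → R := fun x => (ibinom x δ : R)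

def polyfractal : Submodule R (ℤ → R) := Submodule.span R (Set.range (binomialFun R))

variable {R}

lemma mem_polyfractal_iff {f : ℤ → R} :
    f ∈ polyfractal R ↔ ∃ c : ℕ →₀ R, ∀ x, f x = c.sum fun δ a => ((ibinom x δ : ℤ) : R) * a := by
  rw [polyfractal, Finsupp.mem_span_range_iff_exists_finsupp]
  refine exists_congr fun c => ?_
  rw [funext_iff]
  refine forall_congr' fun x => ?_
  simp only [Finsupp.sum, Finset.sum_apply, Pi.smul_apply, smul_eq_mul, binomialFun, mul_comm]
  exact eq_comm

lemma binomialFun_zero : binomialFun R 0 = 1 := by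
  ext x
  simp [binomialFun, ibinom]

lemma fwdDiff_binomialFun_succ (δ : ℕ) : Δ_[1] (binomialFun R (δ + 1)) = binomialFun R δ := by
  ext x
  simp [fwdDiff, binomialFun, ibinom, Ring.choose_succ_succ]

lemma fwdDiff_iter_binomialFun_eq_zero {δ n : ℕ} (h : δ < n) :
    Δ_[1] ^[n] (binomialFun R δ) = 0 := by
  obtain ⟨n, rfl⟩ := Nat.exists_eq_add_of_lt h
  induction δ generalizing n with
  | zero =>
    rw [zero_add, iterate_succ_apply, binomialFun_zero]
    exact (congrArg _ (fwdDiff_const 1 (1 : R))).trans (fwdDiff_iter_zero 1 n)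
  | succ δ ih =>
    rw [show δ + 1 + n + 1 = δ + n + 1 + 1 by ring, iterate_succ_apply, fwdDiff_binomialFun_succ,
      ih n (by omega)]

lemma exists_fwdDiff_iter_eq_zero_of_mem_polyfractal {f : ℤ → R} (hf : f ∈ polyfractal R) :
    ∃ D, Δ_[1] ^[D] f = 0 := by
  induction hf using Submodule.span_induction with
  | mem g hg =>
    obtain ⟨δ, rfl⟩ := hg
    exact ⟨δ + 1, fwdDiff_iter_binomialFun_eq_zero δ.lt_succ_self⟩
  | zero => exact ⟨0, rfl⟩
  | add g₁ g₂ _ _ h₁ h₂ =>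
    obtain ⟨D₁, hD₁⟩ := h₁
    obtain ⟨D₂, hD₂⟩ := h₂
    refine ⟨max D₁ D₂, ?_⟩
    rw [fwdDiff_iter_add, fwdDiff_iter_eq_zero_of_le 1 hD₁ (le_max_left _ _),
      fwdDiff_iter_eq_zero_of_le 1 hD₂ (le_max_right _ _), add_zero]
  | smul a g _ hg =>
    obtain ⟨D, hD⟩ := hg
    exact ⟨D, by rw [fwdDiff_iter_const_smul, hD, smul_zero]⟩

lemma exists_mem_polyfractal_fwdDiff_eq {u : ℤ → R} (hu : u ∈ polyfractal R) :
    ∃ g ∈ polyfractal R, Δ_[1] g = u := by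
  induction hu using Submodule.span_induction with
  | mem u hu =>
    obtain ⟨δ, rfl⟩ := hu
    exact ⟨binomialFun R (δ + 1), Submodule.subset_span ⟨_, rfl⟩, fwdDiff_binomialFun_succ δ⟩
  | zero => exact ⟨0, zero_mem _, fwdDiff_const 1 0⟩
  | add u₁ u₂ _ _ h₁ h₂ =>
    obtain ⟨g₁, hg₁, rfl⟩ := h₁
    obtain ⟨g₂, hg₂, rfl⟩ := h₂
    exact ⟨g₁ + g₂, add_mem hg₁ hg₂, fwdDiff_add 1 g₁ g₂⟩
  | smul a u _ hu =>
    obtain ⟨g, hg, rfl⟩ := hu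
    exact ⟨a • g, Submodule.smul_mem _ a hg, fwdDiff_const_smul 1 a g⟩

lemma mem_polyfractal_of_fwdDiff_mem {f : ℤ → R} (hf : Δ_[1] f ∈ polyfractal R) :
    f ∈ polyfractal R := by
  obtain ⟨g, hg, hfg⟩ := exists_mem_polyfractal_fwdDiff_eq hf
  have hconst : f - g = (f 0 - g 0) • binomialFun R 0 := by
    have hΔ : Δ_[1] (f - g) = 0 := by
      rw [sub_eq_add_neg, fwdDiff_add, ← neg_one_smul R g, fwdDiff_const_smul, hfg]
      simp
    ext x
    simpa [binomialFun_zero] using eq_of_fwdDiff_eq_zero hΔ x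
  rw [← sub_add_cancel f g, hconst]
  exact add_mem (Submodule.smul_mem _ _ (Submodule.subset_span ⟨0, rfl⟩)) hg

lemma mem_polyfractal_of_fwdDiff_iter_eq_zero {D : ℕ} {f : ℤ → R} (hD : Δ_[1] ^[D] f = 0) :
    f ∈ polyfractal R := by
  induction D generalizing f with
  | zero =>
    rw [show f = 0 from hD]
    exact zero_mem _
  | succ D ih => exact mem_polyfractal_of_fwdDiff_mem (ih hD)

theorem mem_polyfractal_iff_exists_fwdDiff_iter_eq_zero {f : ℤ → R} :
    f ∈ polyfractal R ↔ ∃ D, Δ_[1] ^[D] f = 0 :=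
  ⟨exists_fwdDiff_iter_eq_zero_of_mem_polyfractal,
    fun ⟨_, hD⟩ => mem_polyfractal_of_fwdDiff_iter_eq_zero hD⟩

end Polyfractal

lemma Nat.Prime.pow_dvd_choose_pow {p e k K : ℕ} (hp : p.Prime) (hk : k ≠ 0) (h : e + k ≤ K) :
    p ^ e ∣ (p ^ K).choose k := by
  have hkK : k ≤ p ^ K := h.trans' (Nat.le_add_left k e) |>.trans (Nat.lt_pow_self hp.one_lt).le
  have hvk : multiplicity p k < k := by
    rw [Nat.multiplicity_eq_factorization hp hk]
    exact Nat.factorization_lt p hk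
  apply pow_dvd_of_le_emultiplicity
  rw [hp.emultiplicity_choose_prime_pow hkK hk]
  exact_mod_cast (by omega : e ≤ K - multiplicity p k)

section pPrimary

open Polynomial

variable {G : Type*} [AddCommGroup G] {p e : ℕ}

lemma periodic_of_fwdDiff_iter_eq_zero (hp : p.Prime) (hG : ∀ v : G, p ^ e • v = 0)
    {g : ℤ → G} {D K : ℕ} (hg : Δ_[1] ^[D] g = 0) (hK : e + D ≤ K) : Periodic g (p ^ K : ℕ) := by
  intro y
  have hshift := shift_eq_sum_fwdDiff_iter 1 g (p ^ K) y
  rw [nsmul_one] at hshift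
  rw [hshift, sum_eq_single_of_mem 0 (by simp)]
  · simp
  intro k _ hk
  rcases lt_or_ge k D with hkD | hDk
  · obtain ⟨t, ht⟩ := hp.pow_dvd_choose_pow (e := e) (K := K) hk (by omega)
    rw [ht, mul_comm, mul_nsmul, hG]
  · rw [fwdDiff_iter_eq_zero_of_le 1 hg hDk, Pi.zero_apply, smul_zero]

lemma exists_X_sub_one_pow_eq (hp : p.Prime) (m : ℕ) :
    ∃ P : ℤ[X], (X - 1) ^ p ^ m = X ^ p ^ m - 1 + C (p : ℤ) * P := by
  have := Fact.mk hp
  suffices C (p : ℤ) ∣ (X - 1) ^ p ^ m - (X ^ p ^ m - 1) by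
    obtain ⟨P, hP⟩ := this
    exact ⟨P, by rw [← hP]; ring⟩
  have hmap : ((X - 1) ^ p ^ m - (X ^ p ^ m - 1) : ℤ[X]).map (Int.castRingHom (ZMod p)) = 0 := by
    simp [sub_pow_char_pow]
  rw [C_dvd_iff_dvd_coeff]
  intro i
  rw [← ZMod.intCast_zmod_eq_zero_iff_dvd]
  simpa only [coeff_map, eq_intCast, coeff_zero] using congrArg (coeff · i) hmap

lemma Commute.add_pow_apply_of_apply_eq_zero {R M : Type*} [Semiring R] [AddCommMonoid M]
    [Module R M] {A B : Module.End R M} (hAB : Commute A B) {v : M} (hv : A v = 0) (k : ℕ) :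
    ((A + B) ^ k) v = (B ^ k) v := by
  induction k with
  | zero => rfl
  | succ k ih =>
    rw [pow_succ', Module.End.mul_apply, ih, LinearMap.add_apply, ← Module.End.mul_apply,
      ((hAB.pow_right k).eq), Module.End.mul_apply, hv, map_zero, zero_add, pow_succ',
      Module.End.mul_apply]

open fwdDiff_aux in
lemma fwdDiff_iter_eq_zero_of_periodic (hp : p.Prime) (hG : ∀ v : G, p ^ e • v = 0) {g : ℤ → G}
    {m : ℕ} (hg : Periodic g (p ^ m : ℕ)) : Δ_[1] ^[e * p ^ m] g = 0 := by
  set S := shiftₗ ℤ G (1 : ℤ)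
  obtain ⟨P, hP⟩ := exists_X_sub_one_pow_eq hp m
  have hΔ : fwdDiffₗ ℤ G 1 ^ p ^ m = (S ^ p ^ m - 1) + p * aeval S P := by
    have : fwdDiffₗ ℤ G 1 = aeval S (X - 1 : ℤ[X]) := by simp [S, shiftₗ]
    rw [this, ← map_pow, hP]
    simp
  have hcomm : Commute (S ^ p ^ m - 1) (p * aeval S P) := by
    have := (Commute.all (X ^ p ^ m - 1 : ℤ[X]) (C (p : ℤ) * P)).map (aeval S)
    rwa [map_sub, map_pow, aeval_X, map_one, map_mul, aeval_C, algebraMap_int_eq, eq_intCast,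
      Int.cast_natCast] at this
  have hper : (S ^ p ^ m - 1) g = 0 := by
    ext y
    simpa [S, shiftₗ_pow_apply] using sub_eq_zero.2 (hg y)
  rw [← coe_fwdDiffₗ_pow, mul_comm, pow_mul, hΔ, hcomm.add_pow_apply_of_apply_eq_zero hper,
    (Nat.cast_commute p _).mul_pow, ← Nat.cast_pow, Module.End.mul_apply, Module.End.natCast_apply]
  ext y
  exact hG _

end pPrimary

lemma Function.Periodic.natGcd {α : Type*} {g : ℤ → α} {a b : ℕ} (ha : Periodic g a)
    (hb : Periodic g b) : Periodic g (a.gcd b : ℕ) := by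
  rw [Nat.gcd_eq_gcd_ab, mul_comm (a : ℤ), mul_comm (b : ℤ)]
  exact (ha.int_mul _).add_period (hb.int_mul _)

lemma Nat.gcd_prime_pow_eq_ordProj {p q K : ℕ} (hp : p.Prime) (hq : q ≠ 0)
    (hK : q.factorization p ≤ K) : q.gcd (p ^ K) = p ^ q.factorization p := by
  obtain ⟨j, -, hj⟩ := (Nat.dvd_prime_pow hp).1 (Nat.gcd_dvd_right q (p ^ K))
  have hfac := congrArg (·.factorization p) hj
  simp only [Nat.factorization_gcd hq (pow_ne_zero K hp.ne_zero), Finsupp.inf_apply,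
    hp.factorization_pow, Finsupp.single_eq_same] at hfac
  rw [hj, ← hfac, min_eq_left hK]

lemma ZMod.eq_zero_of_forall_castHom_ordProj_eq_zero {r : ℕ} [NeZero r] {a : ZMod r}
    (h : ∀ p : ℕ, p.Prime → p ∣ r →
      ZMod.castHom (Nat.ordProj_dvd r p) (ZMod (p ^ r.factorization p)) a = 0) : a = 0 := by
  rw [← ZMod.natCast_zmod_val a, ZMod.natCast_eq_zero_iff, Nat.dvd_iff_prime_pow_dvd_dvd]
  intro p k hp hpk
  rcases k.eq_zero_or_pos with rfl | hk
  · simp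
  have hpr : p ∣ r := (dvd_pow_self p hk.ne').trans hpk
  have := h p hp hpr
  rw [← ZMod.natCast_zmod_val a, map_natCast, ZMod.natCast_eq_zero_iff] at this
  exact (Nat.pow_dvd_pow p ((hp.pow_dvd_iff_le_factorization (NeZero.ne r)).1 hpk)).trans this

/-- Classification of polyfractal maps between finite cyclic groups: a `q`-periodic map
`f : ℤ → ZMod r` is polyfractal iff for every prime `p` dividing `r`, the reduction of
`f` modulo `p^{v_p(r)}` is `p^{v_p(q)}`-periodic. -/
theorem stmt_19 (r q : ℕ) (hr : 2 ≤ r) (hq : 1 ≤ q) (f : ℤ → ZMod r)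
    (hper : ∀ x : ℤ, f (x + (q : ℕ)) = f x) :
    (∃ c : ℕ →₀ ZMod r,
      ∀ x : ℤ, f x = c.sum fun δ a => ((ibinom x δ : ℤ) : ZMod r) * a) ↔
      (∀ p : ℕ, p.Prime → p ∣ r →
        ∀ x : ℤ,
          ZMod.castHom (Nat.ordProj_dvd r p) (ZMod (p ^ (r.factorization p)))
              (f (x + (p ^ (q.factorization p) : ℕ))) =
            ZMod.castHom (Nat.ordProj_dvd r p) (ZMod (p ^ (r.factorization p))) (f x)) := by
  have : NeZero r := ⟨by omega⟩
  rw [← mem_polyfractal_iff, mem_polyfractal_iff_exists_fwdDiff_iter_eq_zero]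
  constructor
  · rintro ⟨D, hD⟩ p hp hpr
    let π := (ZMod.castHom (Nat.ordProj_dvd r p) (ZMod (p ^ r.factorization p))).toAddMonoidHom
    have hDπ : Δ_[1] ^[D] (π ∘ f) = 0 := by
      rw [fwdDiff_iter_comp_addMonoidHom, hD]
      exact funext fun _ => map_zero π
    have hK : Periodic (π ∘ f) (p ^ (r.factorization p + D + q.factorization p) : ℕ) :=
      periodic_of_fwdDiff_iter_eq_zero (e := r.factorization p) hp
        (ZModModule.char_nsmul_eq_zero _) hDπ (by omega)
    have hgcd := (Periodic.comp hper π).natGcd hK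
    rwa [Nat.gcd_prime_pow_eq_ordProj hp (by omega) (by omega)] at hgcd
  · intro h
    refine ⟨r * q, funext fun x =>
      ZMod.eq_zero_of_forall_castHom_ordProj_eq_zero fun p hp hpr => ?_⟩
    let π := (ZMod.castHom (Nat.ordProj_dvd r p) (ZMod (p ^ r.factorization p))).toAddMonoidHom
    have hπ : Δ_[1] ^[r.factorization p * p ^ q.factorization p] (π ∘ f) = 0 :=
      fwdDiff_iter_eq_zero_of_periodic hp (ZModModule.char_nsmul_eq_zero _) (h p hp hpr)
    have hle : r.factorization p * p ^ q.factorization p ≤ r * q :=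
      Nat.mul_le_mul (Nat.factorization_lt p (NeZero.ne r)).le (Nat.ordProj_le p (by omega))
    have hzero := congrFun (fwdDiff_iter_eq_zero_of_le 1 hπ hle) x
    rwa [fwdDiff_iter_comp_addMonoidHom] at hzero
end
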